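/- For the 7-dimensional Lie algebra L⁷ with structure constants given by [D_1,D_2]=−D_2, [D_1,D_4]=−D_4/2, [D_1,D_5]=D_5/2, [D_1,D_6]=−D_6/2, [D_1,D_7]=−D_7/2, [D_2,D_5]=D_6, [D_3,D_4]=D_7, [D_3,D_7]=−D_4 (others zero), the Killing form of a general element D = Σ l_i D_i satisfies K(D,D) = Trace(ad(D) ∘ ad(D)) = 2(l_1² − l_3²). -/

import Mathlib

/-- The bracket of the 7-dimensional symmetry algebra `L⁷` of the ZK equation, in
coordinates with respect to the basis `D₁,…,D₇` (indexed `0,…,6`); the nonzero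
structure relations are `[D₁,D₂]=−D₂`, `[D₁,D₄]=−D₄/2`, `[D₁,D₅]=D₅/2`,
`[D₁,D₆]=−D₆/2`, `[D₁,D₇]=−D₇/2`, `[D₂,D₅]=D₆`, `[D₃,D₄]=D₇`, `[D₃,D₇]=−D₄`. -/
noncomputable def L7bracket (x y : Fin 7 → ℝ) : Fin 7 → ℝ :=
  ![0,
    -(x 0 * y 1 - x 1 * y 0),
    0,
    -(1 / 2) * (x 0 * y 3 - x 3 * y 0) - (x 2 * y 6 - x 6 * y 2),
    (1 / 2) * (x 0 * y 4 - x 4 * y 0),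
    -(1 / 2) * (x 0 * y 5 - x 5 * y 0) + (x 1 * y 4 - x 4 * y 1),
    -(1 / 2) * (x 0 * y 6 - x 6 * y 0) + (x 2 * y 3 - x 3 * y 2)]

/-- The standard basis vector `Dᵢ` of `L⁷` (index `i : Fin 7` for `D_{i+1}`). -/
noncomputable def Dbasis (i : Fin 7) : Fin 7 → ℝ := Pi.single i 1

/-- The matrix of `ad(D) : X ↦ [D,X]` in the basis `D₁,…,D₇`. -/
noncomputable def adMat (l : Fin 7 → ℝ) : Matrix (Fin 7) (Fin 7) ℝ :=
  Matrix.of fun i j => L7bracket l (Dbasis j) i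

/-
In the basis `D₁,…,D₇`, `ad(D)` is lower triangular except for the `D₄, D₇` block
`[[-l₁/2, -l₃], [l₃, -l₁/2]]` coming from `[D₃,D₄] = D₇`, `[D₃,D₇] = -D₄`. Hence
`Tr(ad(D)²)` is the sum of the squares of the diagonal entries `0, -l₁, 0, -l₁/2, l₁/2, -l₁/2, -l₁/2`,
which is `2 l₁²`, plus twice the product `(-l₃) · l₃` of the two off-diagonal entries of that block.
-/

lemma adMat_eq (l : Fin 7 → ℝ) :
    adMat l = !![0, 0, 0, 0, 0, 0, 0;
      l 1, -l 0, 0, 0, 0, 0, 0;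
      0, 0, 0, 0, 0, 0, 0;
      1 / 2 * l 3, 0, l 6, -(1 / 2) * l 0, 0, 0, -l 2;
      -(1 / 2) * l 4, 0, 0, 0, 1 / 2 * l 0, 0, 0;
      1 / 2 * l 5, -l 4, 0, 0, l 1, -(1 / 2) * l 0, 0;
      1 / 2 * l 6, 0, -l 3, l 2, 0, 0, -(1 / 2) * l 0] := by
  ext i j
  fin_cases i <;> fin_cases j <;> simp [adMat, Dbasis, L7bracket]

/-- The Killing form of `L⁷`: for `D = Σ lᵢ Dᵢ`,
`K(D,D) = Tr(ad(D) ∘ ad(D)) = 2(l₁² − l₃²)`. -/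
theorem stmt12 (l : Fin 7 → ℝ) :
    (adMat l * adMat l).trace = 2 * ((l 0) ^ 2 - (l 2) ^ 2) := by
  rw [adMat_eq]
  simp [Matrix.trace, Fin.sum_univ_seven]
  ring
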